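/- arXiv:2212.00224 — 3 statements merged into one kernel-verified Lean document; each statement's English description precedes it below -/
import Mathlib

section
/- Fix η₀ > 0 and let a : ℕ → ℝ be any sequence satisfying the homogeneous tridiagonal system σ_{0,0} a_0 + τ_{0,0} a_1 = 0, ρ_{1,0} a_0 + σ_{1,0} a_1 + τ_{1,0} a_2 = 0, and ρ_{n,0} a_{n−1} + σ_{n,0} a_n + τ_{n,0} a_{n+1} = 0 for all n ≥ 2. Then a_n = 2 (a_0 / q_{0,0}) · q_{n,0} for every n ≥ 1. (The homogeneous system, corresponding to vanishing Neumann data with indices (m,ν,μ) = (0,+,+), has exactly the one-parameter family of solutions corresponding to constant boundary functions.) -/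
open Real MeasureTheory intervalIntegral Filter Topology

/-- Associated Legendre function of the second kind of half-integer degree,
`Q_{n-1/2}^m(t)`, defined via its real integral representation (valid for `t > 1`). -/
noncomputable def Qh (n m : ℕ) (t : ℝ) : ℝ :=
  ((-1 : ℝ) ^ m / (2 : ℝ) ^ ((n : ℝ) + 1 / 2)) *
    (Real.Gamma ((n : ℝ) + (m : ℝ) + 1 / 2) / Real.Gamma ((n : ℝ) + 1 / 2)) *
    (t ^ 2 - 1) ^ ((m : ℝ) / 2) *
    ∫ s in (-1 : ℝ)..1, (1 - s ^ 2) ^ ((n : ℝ) - 1 / 2) * (t - s) ^ (-((n : ℝ) + (m : ℝ) + 1 / 2))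

/-- `q_{n,m} = Q_{n-1/2}^m(cosh η₀)`. -/
noncomputable def qh (η₀ : ℝ) (n m : ℕ) : ℝ := Qh n m (Real.cosh η₀)

/-- `Φ_n^{+1}(θ) = cos (n θ)`, `Φ_n^{-1}(θ) = sin (n θ)`. -/
noncomputable def Phi (ν : ℤ) (n : ℤ) (θ : ℝ) : ℝ :=
  if ν = 1 then Real.cos ((n : ℝ) * θ) else Real.sin ((n : ℝ) * θ)

/-- A quadruple `(n, m, ν, μ)` is admissible. -/
def Admissible (n m : ℕ) (ν μ : ℤ) : Prop :=
  (ν = 1 ∨ ν = -1) ∧ (μ = 1 ∨ μ = -1) ∧ ¬(n = 0 ∧ ν = -1) ∧ ¬(m = 0 ∧ μ = -1)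

/-- Toroidal Neumann constant `ρ_{n,m}(η₀)` (`n ≥ 1`). -/
noncomputable def rhoT (η₀ : ℝ) (n m : ℕ) : ℝ :=
  if n = 1 then
    (1 / (2 * Real.sinh η₀)) *
      (Real.cosh η₀ + (2 * (m : ℝ) - 1) * qh η₀ 1 m / qh η₀ 0 m)
  else
    (1 / (4 * Real.sinh η₀)) *
      ((2 * (n : ℝ) - 1) * Real.cosh η₀ +
        (2 * ((m : ℝ) - (n : ℝ)) + 1) * qh η₀ n m / qh η₀ (n - 1) m)

/-- Toroidal Neumann constant `σ_{n,m}(η₀)`. -/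
noncomputable def sigmaT (η₀ : ℝ) (n m : ℕ) : ℝ :=
  (-1 / (2 * Real.sinh η₀)) *
    ((2 * (n : ℝ) * Real.cosh η₀ ^ 2 + 1) +
      (2 * ((m : ℝ) - (n : ℝ)) - 1) * Real.cosh η₀ * qh η₀ (n + 1) m / qh η₀ n m)

/-- Toroidal Neumann constant `τ_{n,m}(η₀)`. -/
noncomputable def tauT (η₀ : ℝ) (n m : ℕ) : ℝ :=
  (1 / (4 * Real.sinh η₀)) *
    ((2 * (n : ℝ) + 3) * Real.cosh η₀ +
      (2 * ((m : ℝ) - (n : ℝ)) - 3) * qh η₀ (n + 2) m / qh η₀ (n + 1) m)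

/-- The normal derivative `N_{n,m}^{ν,μ}(θ,φ)` of the interior toroidal harmonic
`I_{n,m}^{ν,μ}` on the torus `η = η₀`. -/
noncomputable def NDer (η₀ : ℝ) (n m : ℕ) (ν μ : ℤ) (θ φ : ℝ) : ℝ :=
  (Real.sqrt (Real.cosh η₀ - Real.cos θ) / (4 * Real.sinh η₀)) * Phi μ (m : ℤ) φ *
    (Phi ν ((n : ℤ) - 1) θ *
        ((1 + 2 * (n : ℝ)) * Real.cosh η₀ -
          (2 * ((n : ℝ) - (m : ℝ)) + 1) * qh η₀ (n + 1) m / qh η₀ n m) -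
      2 * Phi ν (n : ℤ) θ *
        ((2 * (n : ℝ) * Real.cosh η₀ ^ 2 + 1) -
          (2 * ((n : ℝ) - (m : ℝ)) + 1) * Real.cosh η₀ * qh η₀ (n + 1) m / qh η₀ n m) +
      Phi ν ((n : ℤ) + 1) θ *
        ((1 + 2 * (n : ℝ)) * Real.cosh η₀ -
          (2 * ((n : ℝ) - (m : ℝ)) + 1) * qh η₀ (n + 1) m / qh η₀ n m))

/-- Interior toroidal harmonic `I_{n,m}^{ν,μ}[η₀]` in toroidal coordinates. -/
noncomputable def Ih (η₀ : ℝ) (n m : ℕ) (ν μ : ℤ) (η θ φ : ℝ) : ℝ :=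
  Real.sqrt (Real.cosh η - Real.cos θ) *
    (Qh n m (Real.cosh η) / Qh n m (Real.cosh η₀)) * Phi ν (n : ℤ) θ * Phi μ (m : ℤ) φ

/-!
For `m = 0` the numbers `q_{n,0} = Q_{n-1/2}(cosh η₀)` are values of the Legendre function given by
a Laplace-type integral. Integration by parts in that integral yields the Legendre recurrence
`(2n+3) q_{n+2} = 4(n+1) t₀ q_{n+1} - (2n+1) q_n` and the bound `0 < q_{n+1} < t₀ q_n`.
The recurrence makes `(q₀/2, q₁, q₂, …)`, the coefficients of a constant boundary function,
a solution of the homogeneous system; the bound makes every `τ_{n,0}` positive, so that the system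
determines `a_{n+2}` from `a_n, a_{n+1}` and every solution is a multiple of that one.
-/

open Set

def SolvesTridiagonal (ρ σ τ a : ℕ → ℝ) : Prop :=
  σ 0 * a 0 + τ 0 * a 1 = 0 ∧
    ∀ n, ρ (n + 1) * a n + σ (n + 1) * a (n + 1) + τ (n + 1) * a (n + 2) = 0

namespace SolvesTridiagonal

variable {ρ σ τ a b : ℕ → ℝ}

lemma const_mul (ha : SolvesTridiagonal ρ σ τ a) (c : ℝ) :
    SolvesTridiagonal ρ σ τ fun n => c * a n :=
  ⟨by linear_combination c * ha.1, fun n => by linear_combination c * ha.2 n⟩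

lemma eq_of_head_eq (hτ : ∀ n, τ n ≠ 0) (ha : SolvesTridiagonal ρ σ τ a)
    (hb : SolvesTridiagonal ρ σ τ b) (h₀ : a 0 = b 0) : a = b := by
  have hpair : ∀ n, a n = b n ∧ a (n + 1) = b (n + 1) := by
    intro n
    induction n with
    | zero =>
      refine ⟨h₀, mul_left_cancel₀ (hτ 0) ?_⟩
      linear_combination ha.1 - hb.1 - σ 0 * h₀
    | succ n ih =>
      refine ⟨ih.2, mul_left_cancel₀ (hτ (n + 1)) ?_⟩
      linear_combination ha.2 n - hb.2 n - ρ (n + 1) * ih.1 - σ (n + 1) * ih.2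
  exact funext fun n => (hpair n).1

end SolvesTridiagonal

noncomputable def legendreIntegrand (t a b s : ℝ) : ℝ := (1 - s ^ 2) ^ a * (t - s) ^ (-b)

noncomputable def legendreIntegral (t a b : ℝ) : ℝ := ∫ s in (-1 : ℝ)..1, legendreIntegrand t a b s

/-- The Legendre function `Q_ν(t)`, `ν > -1`, `t > 1`, through its Laplace-type integral
`Q_ν(t) = 2^{-ν-1} ∫_{-1}^{1} (1 - s²)^ν (t - s)^{-ν-1} ds`. -/
noncomputable def legendreQ (ν t : ℝ) : ℝ := 2 ^ (-(ν + 1)) * legendreIntegral t ν (ν + 1)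

section LegendreIntegral

variable {t a : ℝ}

lemma intervalIntegrable_one_sub_sq_rpow (ha : -1 < a) :
    IntervalIntegrable (fun s : ℝ => (1 - s ^ 2) ^ a) volume (-1) 1 := by
  have right : IntervalIntegrable (fun s : ℝ => (1 - s ^ 2) ^ a) volume 0 1 := by
    have hsing : IntervalIntegrable (fun s : ℝ => (1 - s) ^ a) volume 0 1 := by
      simpa using ((intervalIntegrable_rpow' (a := 0) (b := 1) ha).comp_sub_left 1).symm
    have hprod : IntervalIntegrable (fun s : ℝ => (1 - s) ^ a * (1 + s) ^ a) volume 0 1 :=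
      hsing.mul_continuousOn <| ContinuousOn.rpow_const (by fun_prop) fun s hs => by
        rw [uIcc_of_le zero_le_one] at hs
        exact Or.inl (by linarith [hs.1])
    refine (intervalIntegrable_congr fun s hs => ?_).1 hprod
    rw [uIoc_of_le zero_le_one] at hs
    rw [← mul_rpow (by linarith [hs.2]) (by linarith [hs.1])]
    ring_nf
  have left : IntervalIntegrable (fun s : ℝ => (1 - s ^ 2) ^ a) volume (-1) 0 := by
    simpa using (right.comp_sub_left 0).symm
  exact left.trans right

lemma continuousOn_sub_rpow (ht : 1 < t) (b : ℝ) :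
    ContinuousOn (fun s : ℝ => (t - s) ^ b) (Icc (-1) 1) :=
  ContinuousOn.rpow_const (by fun_prop) fun s hs => Or.inl (by linarith [hs.2])

lemma intervalIntegrable_legendreIntegrand (ht : 1 < t) (ha : -1 < a) (b : ℝ) :
    IntervalIntegrable (legendreIntegrand t a b) volume (-1) 1 :=
  (intervalIntegrable_one_sub_sq_rpow ha).mul_continuousOn <| by
    rw [uIcc_of_le (by norm_num)]
    exact continuousOn_sub_rpow ht _

lemma continuousOn_legendreIntegrand (ht : 1 < t) (ha : 0 < a) (b : ℝ) :
    ContinuousOn (legendreIntegrand t a b) (Icc (-1) 1) :=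
  (ContinuousOn.rpow_const (by fun_prop) fun _ _ => Or.inr ha.le).mul
    (continuousOn_sub_rpow ht _)

lemma legendreIntegral_pos (ht : 1 < t) (ha : -1 < a) (b : ℝ) : 0 < legendreIntegral t a b :=
  intervalIntegral_pos_of_pos_on (intervalIntegrable_legendreIntegrand ht ha b)
    (fun s hs => mul_pos (rpow_pos_of_pos (by nlinarith [hs.1, hs.2]) _)
      (rpow_pos_of_pos (by linarith [hs.2]) _)) (by norm_num)

lemma integral_legendreIntegrand_add_add (ht : 1 < t) {a₁ a₂ a₃ : ℝ} (h₁ : -1 < a₁)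
    (h₂ : -1 < a₂) (h₃ : -1 < a₃) (b₁ b₂ b₃ c₁ c₂ c₃ : ℝ) :
    ∫ s in (-1 : ℝ)..1, (c₁ * legendreIntegrand t a₁ b₁ s + c₂ * legendreIntegrand t a₂ b₂ s
        + c₃ * legendreIntegrand t a₃ b₃ s) =
      c₁ * legendreIntegral t a₁ b₁ + c₂ * legendreIntegral t a₂ b₂
        + c₃ * legendreIntegral t a₃ b₃ := by
  have i₁ := (intervalIntegrable_legendreIntegrand ht h₁ b₁).const_mul c₁
  have i₂ := (intervalIntegrable_legendreIntegrand ht h₂ b₂).const_mul c₂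
  have i₃ := (intervalIntegrable_legendreIntegrand ht h₃ b₃).const_mul c₃
  rw [intervalIntegral.integral_add (i₁.add i₂) i₃, intervalIntegral.integral_add i₁ i₂,
    intervalIntegral.integral_const_mul, intervalIntegral.integral_const_mul,
    intervalIntegral.integral_const_mul]
  rfl

lemma hasDerivAt_legendreIntegrand {s : ℝ} (a b : ℝ) (hts : 0 < t - s) (hs : 0 < 1 - s ^ 2) :
    HasDerivAt (legendreIntegrand t (a + 1) b)
      (-2 * (a + 1) * t * legendreIntegrand t a b s
        + 2 * (a + 1) * legendreIntegrand t a (b - 1) s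
        + b * legendreIntegrand t (a + 1) (b + 1) s) s := by
  have hpow : HasDerivAt (fun s : ℝ => (1 - s ^ 2) ^ (a + 1))
      (-(2 * s) * (a + 1) * (1 - s ^ 2) ^ a) s := by
    simpa using ((hasDerivAt_pow 2 s).const_sub 1).rpow_const (p := a + 1) (Or.inl hs.ne')
  have hkernel : HasDerivAt (fun s : ℝ => (t - s) ^ (-b)) (-1 * -b * (t - s) ^ (-b - 1)) s :=
    ((hasDerivAt_id s).const_sub t).rpow_const (Or.inl hts.ne')
  refine (hpow.mul hkernel).congr_deriv ?_
  simp only [legendreIntegrand]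
  rw [show -(b - 1) = -b + 1 by ring, show -(b + 1) = -b - 1 by ring, rpow_add_one hts.ne',
    rpow_add_one hs.ne', rpow_sub_one hts.ne']
  ring

/-- Integration by parts against `d/ds (1 - s²)^{a+1}`; the boundary terms vanish. -/
lemma legendreIntegral_ibp (ht : 1 < t) (ha : -1 < a) (b : ℝ) :
    b * legendreIntegral t (a + 1) (b + 1) =
      2 * (a + 1) * (t * legendreIntegral t a b - legendreIntegral t a (b - 1)) := by
  have hFTC := intervalIntegral.integral_eq_sub_of_hasDerivAt_of_le (by norm_num)
    (continuousOn_legendreIntegrand ht (by linarith : 0 < a + 1) b)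
    (fun s hs => hasDerivAt_legendreIntegrand a b (by linarith [hs.2]) (by nlinarith [hs.1, hs.2]))
    (((intervalIntegrable_legendreIntegrand ht ha b).const_mul _).add
      ((intervalIntegrable_legendreIntegrand ht ha _).const_mul _) |>.add
      ((intervalIntegrable_legendreIntegrand ht (by linarith) _).const_mul _))
  rw [integral_legendreIntegrand_add_add ht ha ha (by linarith)] at hFTC
  simp only [legendreIntegrand, one_pow, sub_self, zero_rpow (by linarith : a + 1 ≠ 0),
    zero_mul, neg_one_sq] at hFTC
  linarith

/-- From `1 - s² = -(t² - 1) + 2t (t - s) - (t - s)²`. -/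
lemma legendreIntegral_add_one_left (ht : 1 < t) (ha : -1 < a) (b : ℝ) :
    legendreIntegral t (a + 1) b = -(t ^ 2 - 1) * legendreIntegral t a b
      + 2 * t * legendreIntegral t a (b - 1) + -1 * legendreIntegral t a (b - 2) := by
  rw [← integral_legendreIntegrand_add_add ht ha ha ha]
  refine intervalIntegral.integral_congr fun s hs => ?_
  rw [uIcc_of_le (by norm_num)] at hs
  have hts : 0 < t - s := by linarith [hs.2]
  simp only [legendreIntegrand]
  rw [rpow_add' (by nlinarith [hs.1, hs.2]) (by linarith), rpow_one,
    show -(b - 1) = -b + 1 by ring, show -(b - 2) = -b + 2 by ring, rpow_add_one hts.ne',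
    rpow_add hts, rpow_two]
  ring

end LegendreIntegral

section LegendreQ

variable {ν t : ℝ}

lemma legendreIntegral_eq_legendreQ (ν t : ℝ) :
    legendreIntegral t ν (ν + 1) = 2 ^ (ν + 1) * legendreQ ν t := by
  rw [legendreQ, ← mul_assoc, ← rpow_add two_pos, add_neg_cancel, rpow_zero, one_mul]

lemma legendreQ_pos (ht : 1 < t) (hν : -1 < ν) : 0 < legendreQ ν t :=
  mul_pos (rpow_pos_of_pos two_pos _) (legendreIntegral_pos ht hν _)

lemma sq_sub_one_mul_legendreIntegral (ht : 1 < t) (hν : -1 < ν) :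
    (t ^ 2 - 1) * legendreIntegral t ν (ν + 2) =
      2 ^ (ν + 1) * (t * legendreQ ν t - legendreQ (ν + 1) t) := by
  have hibp := legendreIntegral_ibp ht hν (ν + 1)
  have hlower := legendreIntegral_add_one_left ht hν (ν + 2)
  have hnext := legendreIntegral_eq_legendreQ (ν + 1) t
  rw [rpow_add_one two_ne_zero, show ν + 1 + 1 = ν + 2 by ring] at hnext
  rw [show ν + 1 + 1 = ν + 2 by ring, show ν + 1 - 1 = ν by ring, hnext,
    legendreIntegral_eq_legendreQ] at hibp
  rw [show ν + 2 - 1 = ν + 1 by ring, show ν + 2 - 2 = ν by ring, hnext,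
    legendreIntegral_eq_legendreQ] at hlower
  have hν' : ν + 1 ≠ 0 := by linarith
  apply mul_left_cancel₀ hν'
  linear_combination (ν + 1) * hlower - hibp / 2

lemma legendreQ_add_one_lt (ht : 1 < t) (hν : -1 < ν) :
    legendreQ (ν + 1) t < t * legendreQ ν t := by
  have hpos : 0 < (t ^ 2 - 1) * legendreIntegral t ν (ν + 2) :=
    mul_pos (by nlinarith) (legendreIntegral_pos ht hν _)
  rw [sq_sub_one_mul_legendreIntegral ht hν] at hpos
  linarith [pos_of_mul_pos_right hpos (rpow_pos_of_pos two_pos _).le]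

lemma legendreQ_recurrence (ht : 1 < t) (hν : -1 < ν) :
    (ν + 2) * legendreQ (ν + 2) t =
      (2 * ν + 3) * t * legendreQ (ν + 1) t - (ν + 1) * legendreQ ν t := by
  have hibp := legendreIntegral_ibp ht hν (ν + 2)
  have h₀ := sq_sub_one_mul_legendreIntegral ht hν
  have h₁ := sq_sub_one_mul_legendreIntegral ht (by linarith : -1 < ν + 1)
  rw [rpow_add_one two_ne_zero, show ν + 1 + 1 = ν + 2 by ring,
    show ν + 1 + 2 = ν + 3 by ring] at h₁
  rw [show ν + 2 + 1 = ν + 3 by ring, show ν + 2 - 1 = ν + 1 by ring,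
    legendreIntegral_eq_legendreQ] at hibp
  apply mul_left_cancel₀ (rpow_pos_of_pos two_pos (ν + 1)).ne'
  linear_combination (-1 / 2) * ((t ^ 2 - 1) * hibp - (ν + 2) * h₁ + 2 * (ν + 1) * t * h₀)

end LegendreQ

lemma Qh_zero_eq_legendreQ (n : ℕ) (t : ℝ) : Qh n 0 t = legendreQ (n - 1 / 2) t := by
  have hΓ : Gamma ((n : ℝ) + 1 / 2) ≠ 0 := (Gamma_pos_of_pos (by positivity)).ne'
  rw [Qh, legendreQ, legendreIntegral, show (n : ℝ) - 1 / 2 + 1 = n + 1 / 2 by ring,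
    rpow_neg zero_le_two]
  simp only [pow_zero, CharP.cast_eq_zero, add_zero, div_self hΓ, zero_div, rpow_zero, mul_one,
    legendreIntegrand]
  rw [one_div]

/-- Up to a factor, the coefficients of the constant function in the harmonics `I_{n,0}`, by Heine's
expansion `(cosh η - cos θ)^{-1/2} = (√2/π) ∑ ε_n Q_{n-1/2}(cosh η) cos nθ`, `ε₀ = 1`, `εₙ = 2`. -/
noncomputable def constantMode (η₀ : ℝ) : ℕ → ℝ
  | 0 => qh η₀ 0 0 / 2
  | n + 1 => qh η₀ (n + 1) 0

lemma qh_zero_eq_legendreQ (η₀ : ℝ) (n : ℕ) :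
    qh η₀ n 0 = legendreQ (n - 1 / 2) (cosh η₀) :=
  Qh_zero_eq_legendreQ n _

lemma tauT_mul_qh (η₀ : ℝ) (n : ℕ) (hq : qh η₀ (n + 1) 0 ≠ 0) :
    tauT η₀ n 0 * qh η₀ (n + 1) 0 =
      (2 * n + 3) / (4 * sinh η₀) * (cosh η₀ * qh η₀ (n + 1) 0 - qh η₀ (n + 2) 0) := by
  rw [tauT]
  field_simp
  ring

lemma sigmaT_mul_qh (η₀ : ℝ) (n : ℕ) (hq : qh η₀ n 0 ≠ 0) :
    sigmaT η₀ n 0 * qh η₀ n 0 = -1 / (2 * sinh η₀) *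
      ((2 * n * cosh η₀ ^ 2 + 1) * qh η₀ n 0 - (2 * n + 1) * cosh η₀ * qh η₀ (n + 1) 0) := by
  rw [sigmaT]
  field_simp
  ring

section Neumann

variable {η₀ : ℝ}

lemma qh_zero_pos (hη₀ : 0 < η₀) (n : ℕ) : 0 < qh η₀ n 0 := by
  rw [qh_zero_eq_legendreQ]
  exact legendreQ_pos (one_lt_cosh.2 hη₀.ne') (by linarith [(n.cast_nonneg : (0 : ℝ) ≤ n)])

lemma qh_zero_succ_lt (hη₀ : 0 < η₀) (n : ℕ) : qh η₀ (n + 1) 0 < cosh η₀ * qh η₀ n 0 := by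
  rw [qh_zero_eq_legendreQ, qh_zero_eq_legendreQ, Nat.cast_succ, add_sub_right_comm]
  exact legendreQ_add_one_lt (one_lt_cosh.2 hη₀.ne') (by linarith [(n.cast_nonneg : (0 : ℝ) ≤ n)])

lemma qh_zero_recurrence (hη₀ : 0 < η₀) (n : ℕ) :
    (2 * n + 3) * qh η₀ (n + 2) 0 =
      4 * (n + 1) * cosh η₀ * qh η₀ (n + 1) 0 - (2 * n + 1) * qh η₀ n 0 := by
  have h := legendreQ_recurrence (one_lt_cosh.2 hη₀.ne')
    (by linarith [(n.cast_nonneg : (0 : ℝ) ≤ n)] : -1 < (n : ℝ) - 1 / 2)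
  simp only [qh_zero_eq_legendreQ, Nat.cast_add, Nat.cast_one, Nat.cast_ofNat, add_sub_right_comm]
  linear_combination 2 * h

lemma tauT_pos (hη₀ : 0 < η₀) (n : ℕ) : 0 < tauT η₀ n 0 := by
  have hq := qh_zero_pos hη₀ (n + 1)
  refine pos_of_mul_pos_left ?_ hq.le
  rw [tauT_mul_qh η₀ n hq.ne']
  exact mul_pos (by positivity [sinh_pos_iff.2 hη₀]) (by linarith [qh_zero_succ_lt hη₀ (n + 1)])

lemma rhoT_mul_constantMode (hη₀ : 0 < η₀) (n : ℕ) :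
    rhoT η₀ (n + 1) 0 * constantMode η₀ n =
      (2 * n + 1) / (4 * sinh η₀) * (cosh η₀ * qh η₀ n 0 - qh η₀ (n + 1) 0) := by
  have hq := (qh_zero_pos hη₀ n).ne'
  cases n with
  | zero =>
    rw [rhoT, if_pos rfl, constantMode]
    field_simp
    ring
  | succ k =>
    rw [rhoT, if_neg (by omega), constantMode, Nat.add_sub_cancel]
    field_simp
    push_cast
    ring

lemma solvesTridiagonal_constantMode (hη₀ : 0 < η₀) :
    SolvesTridiagonal (fun n => rhoT η₀ n 0) (fun n => sigmaT η₀ n 0) (fun n => tauT η₀ n 0)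
      (constantMode η₀) := by
  have hq n := (qh_zero_pos hη₀ n).ne'
  constructor
  · have hσ := sigmaT_mul_qh η₀ 0 (hq 0)
    have hτ := tauT_mul_qh η₀ 0 (hq 1)
    have hrec := qh_zero_recurrence hη₀ 0
    simp only [constantMode, Nat.cast_zero, zero_add] at hσ hτ hrec ⊢
    linear_combination hσ / 2 + hτ - hrec / (4 * sinh η₀)
  · intro n
    have hρ := rhoT_mul_constantMode hη₀ n
    have hσ := sigmaT_mul_qh η₀ (n + 1) (hq (n + 1))
    have hτ := tauT_mul_qh η₀ (n + 1) (hq (n + 2))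
    have hrec₀ := qh_zero_recurrence hη₀ n
    have hrec₁ := qh_zero_recurrence hη₀ (n + 1)
    simp only [Nat.add_assoc, Nat.reduceAdd] at hσ hτ hrec₁
    push_cast at hσ hτ hrec₁
    change rhoT η₀ (n + 1) 0 * constantMode η₀ n + sigmaT η₀ (n + 1) 0 * qh η₀ (n + 1) 0
      + tauT η₀ (n + 1) 0 * qh η₀ (n + 2) 0 = 0
    linear_combination hρ + hσ + hτ + cosh η₀ / (4 * sinh η₀) * hrec₀
      - 1 / (4 * sinh η₀) * hrec₁

end Neumann

/-- the homogeneous tridiagonal system at `(m,ν,μ) = (0,+,+)` has only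
the solutions corresponding to constant boundary functions. -/
theorem homogeneous_system_solution (η₀ : ℝ) (hη₀ : 0 < η₀) (a : ℕ → ℝ)
    (h0 : sigmaT η₀ 0 0 * a 0 + tauT η₀ 0 0 * a 1 = 0)
    (h1 : rhoT η₀ 1 0 * a 0 + sigmaT η₀ 1 0 * a 1 + tauT η₀ 1 0 * a 2 = 0)
    (hn : ∀ n : ℕ, 2 ≤ n →
      rhoT η₀ n 0 * a (n - 1) + sigmaT η₀ n 0 * a n + tauT η₀ n 0 * a (n + 1) = 0) :
    ∀ n : ℕ, 1 ≤ n → a n = 2 * (a 0 / qh η₀ 0 0) * qh η₀ n 0 := by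
  have ha : SolvesTridiagonal (fun n => rhoT η₀ n 0) (fun n => sigmaT η₀ n 0)
      (fun n => tauT η₀ n 0) a :=
    ⟨h0, fun | 0 => h1 | n + 1 => hn (n + 2) (by omega)⟩
  have hsol := (solvesTridiagonal_constantMode hη₀).const_mul (2 * (a 0 / qh η₀ 0 0))
  have hhead : a 0 = 2 * (a 0 / qh η₀ 0 0) * constantMode η₀ 0 := by
    have hq₀ := (qh_zero_pos hη₀ 0).ne'
    simp only [constantMode]
    field_simp
  have heq := ha.eq_of_head_eq (fun n => (tauT_pos hη₀ n).ne') hsol hhead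
  intro n hn1
  obtain ⟨k, rfl⟩ := Nat.exists_eq_add_of_le' hn1
  exact congrFun heq (k + 1)
end

section
/- Fix η₀ > 0 and an integer m ≥ 0. Then the ratio of consecutive Legendre functions of the second kind satisfies lim_{n→∞} q_{n,m}/q_{n−1,m} = e^{−η₀}. -/
open Real MeasureTheory intervalIntegral Filter Topology

/-! For `t = cosh η₀` and `n ≥ 1`, `q_{n,m} = c_n ∫ g ^ (n - 1) w` over `(-1, 1)`, where
`g s = (1 - s²) / (t - s)`, `w` is the integrand for `n = 1`, and the prefactors satisfy
`c_{n+1} / c_n → 1/2`. The ratio of consecutive moments `∫ g ^ n w` of a positive weight tends to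
the essential supremum of `g`: it is at most that supremum, and at least any `r` below it because
the part of the moment where `g < r` becomes negligible. Here the supremum is `2 e^{-η₀}`,
attained at `s = e^{-η₀}`. -/

open Set

section MomentRatio

variable {α : Type*} [MeasurableSpace α] {μ : Measure α} {g w : α → ℝ} {M : ℝ}

lemma mul_pow_sub_pow_succ_le_pow_succ {x r : ℝ} (hx : 0 ≤ x) (hr : 0 ≤ r) (n : ℕ) :
    r * x ^ n - r ^ (n + 1) ≤ x ^ (n + 1) := by
  rcases le_total r x with hrx | hxr
  · have := pow_nonneg hx n
    nlinarith [pow_nonneg hr (n + 1), pow_succ x n]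
  · have := pow_le_pow_left₀ hx hxr n
    nlinarith [pow_nonneg hx (n + 1), pow_succ r n]

lemma integrable_pow_mul (hw : Integrable w μ) (hg : Measurable g) (hg0 : ∀ᵐ x ∂μ, 0 ≤ g x)
    (hgM : ∀ᵐ x ∂μ, g x ≤ M) (n : ℕ) : Integrable (fun x => g x ^ n * w x) μ :=
  hw.bdd_mul (hg.pow_const n).aestronglyMeasurable <| by
    filter_upwards [hg0, hgM] with x hx0 hxM
    rw [Real.norm_eq_abs, abs_pow, abs_of_nonneg hx0]
    exact pow_le_pow_left₀ hx0 hxM n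

lemma integral_pow_succ_mul_le (hw : Integrable w μ) (hw0 : 0 ≤ᵐ[μ] w) (hg : Measurable g)
    (hg0 : ∀ᵐ x ∂μ, 0 ≤ g x) (hgM : ∀ᵐ x ∂μ, g x ≤ M) (n : ℕ) :
    ∫ x, g x ^ (n + 1) * w x ∂μ ≤ M * ∫ x, g x ^ n * w x ∂μ := by
  rw [← MeasureTheory.integral_const_mul]
  refine integral_mono_ae (integrable_pow_mul hw hg hg0 hgM _)
    ((integrable_pow_mul hw hg hg0 hgM n).const_mul M) ?_
  filter_upwards [hw0, hg0, hgM] with x hxw hx0 hxM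
  calc g x ^ (n + 1) * w x = g x * (g x ^ n * w x) := by ring
    _ ≤ M * (g x ^ n * w x) := by gcongr; exact mul_nonneg (pow_nonneg hx0 n) hxw

lemma mul_integral_pow_mul_sub_le (hw : Integrable w μ) (hw0 : 0 ≤ᵐ[μ] w) (hg : Measurable g)
    (hg0 : ∀ᵐ x ∂μ, 0 ≤ g x) (hgM : ∀ᵐ x ∂μ, g x ≤ M) {r : ℝ} (hr : 0 ≤ r) (n : ℕ) :
    r * ∫ x, g x ^ n * w x ∂μ - r ^ (n + 1) * ∫ x, w x ∂μ ≤ ∫ x, g x ^ (n + 1) * w x ∂μ := by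
  rw [← MeasureTheory.integral_const_mul, ← MeasureTheory.integral_const_mul,
    ← integral_sub ((integrable_pow_mul hw hg hg0 hgM n).const_mul r) (hw.const_mul _)]
  refine integral_mono_ae (((integrable_pow_mul hw hg hg0 hgM n).const_mul r).sub
    (hw.const_mul _)) (integrable_pow_mul hw hg hg0 hgM _) ?_
  filter_upwards [hw0, hg0] with x hxw hx0
  calc r * (g x ^ n * w x) - r ^ (n + 1) * w x = (r * g x ^ n - r ^ (n + 1)) * w x := by ring
    _ ≤ g x ^ (n + 1) * w x := by gcongr; exact mul_pow_sub_pow_succ_le_pow_succ hx0 hr n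

lemma pow_mul_setIntegral_le_integral_pow_mul (hw : Integrable w μ) (hw0 : 0 ≤ᵐ[μ] w)
    (hg : Measurable g) (hg0 : ∀ᵐ x ∂μ, 0 ≤ g x) (hgM : ∀ᵐ x ∂μ, g x ≤ M) {r : ℝ} (hr : 0 ≤ r)
    (n : ℕ) : r ^ n * ∫ x in {x | r < g x}, w x ∂μ ≤ ∫ x, g x ^ n * w x ∂μ := by
  have hS : MeasurableSet {x | r < g x} := measurableSet_lt measurable_const hg
  rw [← MeasureTheory.integral_const_mul]
  calc ∫ x in {x | r < g x}, r ^ n * w x ∂μ ≤ ∫ x in {x | r < g x}, g x ^ n * w x ∂μ := by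
        refine integral_mono_ae (hw.const_mul _).integrableOn
          (integrable_pow_mul hw hg hg0 hgM n).integrableOn ?_
        filter_upwards [ae_restrict_mem hS, ae_restrict_of_ae hw0] with x hxS hxw
        gcongr
    _ ≤ ∫ x, g x ^ n * w x ∂μ := by
        refine setIntegral_le_integral (integrable_pow_mul hw hg hg0 hgM n) ?_
        filter_upwards [hw0, hg0] with x hxw hx0
        exact mul_nonneg (pow_nonneg hx0 n) hxw

lemma setIntegral_pos_of_ae_pos (hw : Integrable w μ) (hw0 : ∀ᵐ x ∂μ, 0 < w x) {S : Set α}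
    (hS : 0 < μ S) : 0 < ∫ x in S, w x ∂μ := by
  rw [setIntegral_pos_iff_support_of_nonneg_ae (ae_restrict_of_ae (hw0.mono fun x hx => hx.le))
    hw.integrableOn, inter_comm, measure_inter_conull]
  · exact hS
  · exact measure_mono_null (fun x hx => by simp_all) (ae_iff.1 hw0)

/-- `hgM` and `hpos` say that `M` is the essential supremum of `g`. -/
theorem tendsto_integral_pow_succ_mul_div_integral_pow_mul (hw : Integrable w μ)
    (hw0 : ∀ᵐ x ∂μ, 0 < w x) (hg : Measurable g) (hg0 : ∀ᵐ x ∂μ, 0 ≤ g x)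
    (hgM : ∀ᵐ x ∂μ, g x ≤ M) (hM : 0 < M) (hpos : ∀ r < M, 0 < μ {x | r < g x}) :
    Tendsto (fun n : ℕ => (∫ x, g x ^ (n + 1) * w x ∂μ) / ∫ x, g x ^ n * w x ∂μ) atTop
      (𝓝 M) := by
  set K : ℕ → ℝ := fun n => ∫ x, g x ^ n * w x ∂μ
  have hw0' : 0 ≤ᵐ[μ] w := hw0.mono fun x hx => hx.le
  have hA : ∀ r < M, 0 < ∫ x in {x | r < g x}, w x ∂μ := fun r hr =>
    setIntegral_pos_of_ae_pos hw hw0 (hpos r hr)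
  have hKpos : ∀ n, 0 < K n := fun n =>
    (mul_pos (pow_pos (half_pos hM) n) (hA _ (half_lt_self hM))).trans_le
      (pow_mul_setIntegral_le_integral_pow_mul hw hw0' hg hg0 hgM (half_pos hM).le n)
  refine tendsto_order.2 ⟨fun a ha => ?_, fun b hb => Eventually.of_forall fun n => ?_⟩
  · obtain ⟨r, har, hrM⟩ := exists_between (max_lt ha hM)
    obtain ⟨ρ, hrρ, hρM⟩ := exists_between hrM
    have hr : 0 < r := (le_max_right a 0).trans_lt har
    have hρ : 0 < ρ := hr.trans hrρ
    set A := ∫ x in {x | ρ < g x}, w x ∂μ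
    set B := ∫ x, w x ∂μ
    have hsmall : ∀ᶠ n : ℕ in atTop, r * B / A * (r / ρ) ^ n < r - a := by
      have h := (tendsto_pow_atTop_nhds_zero_of_lt_one (div_pos hr hρ).le
        ((div_lt_one hρ).2 hrρ)).const_mul (r * B / A)
      rw [mul_zero] at h
      exact h.eventually (gt_mem_nhds (by linarith [le_max_left a 0]))
    filter_upwards [hsmall] with n hn
    rw [lt_div_iff₀ (hKpos n)]
    have hlow := mul_integral_pow_mul_sub_le hw hw0' hg hg0 hgM hr.le n
    have hKn := pow_mul_setIntegral_le_integral_pow_mul hw hw0' hg hg0 hgM hρ.le n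
    have hA0 : 0 < A := hA ρ hρM
    have hB : 0 ≤ B := integral_nonneg_of_ae hw0'
    have htail : r ^ (n + 1) * B ≤ r * B / A * (r / ρ) ^ n * K n := calc
      r ^ (n + 1) * B = r * B / A * (r / ρ) ^ n * (ρ ^ n * A) := by
        rw [div_pow]
        field_simp
        ring
      _ ≤ r * B / A * (r / ρ) ^ n * K n := by
        gcongr
    nlinarith [hKpos n]
  · exact ((div_le_iff₀ (hKpos n)).2
      (integral_pow_succ_mul_le hw hw0' hg hg0 hgM n)).trans_lt hb

end MomentRatio

section Legendre

noncomputable def legendreQCoeff (n m : ℕ) (t : ℝ) : ℝ :=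
  ((-1 : ℝ) ^ m / (2 : ℝ) ^ ((n : ℝ) + 1 / 2)) *
    (Real.Gamma ((n : ℝ) + (m : ℝ) + 1 / 2) / Real.Gamma ((n : ℝ) + 1 / 2)) *
    (t ^ 2 - 1) ^ ((m : ℝ) / 2)

noncomputable def legendreQIntegrand (n m : ℕ) (t s : ℝ) : ℝ :=
  (1 - s ^ 2) ^ ((n : ℝ) - 1 / 2) * (t - s) ^ (-((n : ℝ) + (m : ℝ) + 1 / 2))

lemma Qh_eq_legendreQCoeff_mul_integral (n m : ℕ) (t : ℝ) :
    Qh n m t = legendreQCoeff n m t * ∫ s in (-1 : ℝ)..1, legendreQIntegrand n m t s :=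
  rfl

lemma legendreQCoeff_succ_div (n m : ℕ) {t : ℝ} (ht : 1 < t) :
    legendreQCoeff (n + 1) m t / legendreQCoeff n m t =
      (n + m + 1 / 2) / (2 * n + 1) := by
  have hG : ∀ x : ℝ, 0 < x → Real.Gamma (x + 1) = x * Real.Gamma x := fun x hx =>
    Real.Gamma_add_one hx.ne'
  have h2 : (2 : ℝ) ^ ((n : ℝ) + 1 + 1 / 2) = 2 * (2 : ℝ) ^ ((n : ℝ) + 1 / 2) := by
    rw [add_right_comm, Real.rpow_add_one two_ne_zero, mul_comm]
  have hGm := hG ((n : ℝ) + m + 1 / 2) (by positivity)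
  have hGn := hG ((n : ℝ) + 1 / 2) (by positivity)
  rw [add_right_comm] at hGm hGn
  have hT : 0 < (t ^ 2 - 1) ^ ((m : ℝ) / 2) := Real.rpow_pos_of_pos (by nlinarith) _
  have hGm0 : 0 < Real.Gamma ((n : ℝ) + m + 1 / 2) := Real.Gamma_pos_of_pos (by positivity)
  have hGn0 : 0 < Real.Gamma ((n : ℝ) + 1 / 2) := Real.Gamma_pos_of_pos (by positivity)
  simp only [legendreQCoeff, Nat.cast_succ]
  rw [h2, add_right_comm (n : ℝ) 1 (m : ℝ), hGm, hGn]
  field_simp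

lemma tendsto_legendreQCoeff_succ_div (m : ℕ) {t : ℝ} (ht : 1 < t) :
    Tendsto (fun n : ℕ => legendreQCoeff (n + 1) m t / legendreQCoeff n m t) atTop
      (𝓝 (1 / 2)) := by
  refine (tendsto_add_mul_div_add_mul_atTop_nhds ((m : ℝ) + 1 / 2) 1 1 two_ne_zero).congr
    fun n => ?_
  rw [legendreQCoeff_succ_div n m ht]
  ring

lemma legendreQIntegrand_succ (n m : ℕ) {t s : ℝ} (ht : 1 < t) (hs : s ∈ Ioo (-1 : ℝ) 1) :
    legendreQIntegrand (n + 1) m t s =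
      (1 - s ^ 2) / (t - s) * legendreQIntegrand n m t s := by
  have h1 : 0 < 1 - s ^ 2 := by nlinarith [hs.1, hs.2]
  have h2 : 0 < t - s := by linarith [hs.2]
  simp only [legendreQIntegrand, Nat.cast_succ]
  rw [show (n : ℝ) + 1 - 1 / 2 = (n - 1 / 2) + 1 by ring, Real.rpow_add_one h1.ne',
    show -((n : ℝ) + 1 + m + 1 / 2) = -(n + m + 1 / 2) + (-1) by ring, Real.rpow_add h2,
    Real.rpow_neg_one]
  field_simp

lemma legendreQIntegrand_add_one (n m : ℕ) {t s : ℝ} (ht : 1 < t) (hs : s ∈ Ioo (-1 : ℝ) 1) :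
    legendreQIntegrand (n + 1) m t s =
      ((1 - s ^ 2) / (t - s)) ^ n * legendreQIntegrand 1 m t s := by
  induction n with
  | zero => simp
  | succ n ih => rw [legendreQIntegrand_succ _ m ht hs, ih]; ring

lemma intervalIntegral_legendreQIntegrand_add_one (n m : ℕ) {t : ℝ} (ht : 1 < t) :
    ∫ s in (-1 : ℝ)..1, legendreQIntegrand (n + 1) m t s =
      ∫ s in Ioo (-1 : ℝ) 1, ((1 - s ^ 2) / (t - s)) ^ n * legendreQIntegrand 1 m t s := by
  rw [intervalIntegral.integral_of_le (by norm_num), integral_Ioc_eq_integral_Ioo]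
  exact setIntegral_congr_fun measurableSet_Ioo fun s hs => legendreQIntegrand_add_one n m ht hs

lemma legendreQIntegrand_pos (n m : ℕ) {t s : ℝ} (ht : 1 < t) (hs : s ∈ Ioo (-1 : ℝ) 1) :
    0 < legendreQIntegrand n m t s :=
  mul_pos (Real.rpow_pos_of_pos (by nlinarith [hs.1, hs.2]) _)
    (Real.rpow_pos_of_pos (by linarith [hs.2]) _)

lemma continuousOn_legendreQIntegrand_add_one (n m : ℕ) {t : ℝ} (ht : 1 < t) :
    ContinuousOn (legendreQIntegrand (n + 1) m t) (Icc (-1) 1) := by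
  refine ContinuousOn.mul ?_ ?_
  · refine (continuousOn_const.sub (continuousOn_id.pow 2)).rpow_const fun s _ => Or.inr ?_
    push_cast
    linarith [(n.cast_nonneg : (0 : ℝ) ≤ n)]
  · exact (continuousOn_const.sub continuousOn_id).rpow_const fun s hs =>
      Or.inl (by linarith [hs.2] : (0 : ℝ) < t - s).ne'

lemma one_sub_sq_div_cosh_sub (η : ℝ) {s : ℝ} (hs : s < cosh η) :
    (1 - s ^ 2) / (cosh η - s) = 2 * exp (-η) - (s - exp (-η)) ^ 2 / (cosh η - s) := by
  have h : exp η * exp (-η) = 1 := by rw [← exp_add, add_neg_cancel, exp_zero]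
  rw [eq_sub_iff_add_eq, ← add_div, div_eq_iff (sub_pos.2 hs).ne', cosh_eq]
  linear_combination (-1) * h

lemma tendsto_intervalIntegral_legendreQIntegrand_succ_div {η : ℝ} (hη : 0 < η) (m : ℕ) :
    Tendsto (fun n : ℕ => (∫ s in (-1 : ℝ)..1, legendreQIntegrand (n + 1 + 1) m (cosh η) s) /
        ∫ s in (-1 : ℝ)..1, legendreQIntegrand (n + 1) m (cosh η) s) atTop
      (𝓝 (2 * exp (-η))) := by
  have ht : 1 < cosh η := one_lt_cosh.2 hη.ne'
  have hlt : ∀ s ∈ Ioo (-1 : ℝ) 1, s < cosh η := fun s hs => hs.2.trans ht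
  have hc : exp (-η) ∈ Ioo (-1 : ℝ) 1 :=
    ⟨by linarith [exp_pos (-η)], exp_lt_one_iff.2 (neg_lt_zero.2 hη)⟩
  simp only [intervalIntegral_legendreQIntegrand_add_one _ m ht]
  refine tendsto_integral_pow_succ_mul_div_integral_pow_mul
    ((continuousOn_legendreQIntegrand_add_one 0 m ht).integrableOn_Icc.mono_set
      Ioo_subset_Icc_self)
    ((ae_restrict_iff' measurableSet_Ioo).2 (ae_of_all _ fun s hs =>
      legendreQIntegrand_pos 1 m ht hs))
    (by fun_prop)
    ((ae_restrict_iff' measurableSet_Ioo).2 (ae_of_all _ fun s hs =>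
      div_nonneg (by nlinarith [hs.1, hs.2]) (sub_pos.2 (hlt s hs)).le))
    ((ae_restrict_iff' measurableSet_Ioo).2 (ae_of_all _ fun s hs => by
      rw [one_sub_sq_div_cosh_sub η (hlt s hs)]
      exact sub_le_self _ (div_nonneg (sq_nonneg _) (sub_pos.2 (hlt s hs)).le)))
    (by positivity) fun r hr => ?_
  rw [Measure.restrict_apply (measurableSet_lt measurable_const (by fun_prop)), inter_comm]
  refine IsOpen.measure_pos volume ?_ ⟨exp (-η), hc, ?_⟩
  · refine ContinuousOn.isOpen_inter_preimage ?_ isOpen_Ioo isOpen_Ioi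
    exact ContinuousOn.div (by fun_prop) (by fun_prop) fun s hs => (sub_pos.2 (hlt s hs)).ne'
  · simpa [one_sub_sq_div_cosh_sub η (hlt _ hc)] using hr

end Legendre

/-- ratio asymptotics of consecutive half-integer Legendre functions of
the second kind. -/
theorem q_ratio_limit (η₀ : ℝ) (hη₀ : 0 < η₀) (m : ℕ) :
    Filter.Tendsto (fun n : ℕ => qh η₀ (n + 1) m / qh η₀ n m)
      Filter.atTop (nhds (Real.exp (-η₀))) := by
  have ht : 1 < cosh η₀ := one_lt_cosh.2 hη₀.ne'
  have hlim := ((tendsto_add_atTop_iff_nat 1).2 (tendsto_legendreQCoeff_succ_div m ht)).mul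
    (tendsto_intervalIntegral_legendreQIntegrand_succ_div hη₀ m)
  rw [one_div_mul_eq_div, mul_div_cancel_left₀ _ two_ne_zero] at hlim
  rw [← tendsto_add_atTop_iff_nat 1]
  refine hlim.congr fun n => ?_
  simp only [qh, Qh_eq_legendreQCoeff_mul_integral, mul_div_mul_comm]
end

section
/- Fix η₀ > 0 and an integer m ≥ 0. Then the toroidal Neumann constants satisfy the asymptotic limits lim_{n→∞} ρ_{n,m}/n = 1/2, lim_{n→∞} σ_{n,m}/n = −cosh η₀, and lim_{n→∞} τ_{n,m}/n = 1/2. -/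
open Real MeasureTheory intervalIntegral Filter Topology

/-! `q_{n,m}` is an explicit Gamma factor times `J_n = ∫_{-1}^{1} g(s)^{n-1} w(s) ds`, where
`g(s) = (1 - s²)/(cosh η₀ - s)` and `w` is the integrand for `n = 1`. The ratio of consecutive
moments `∫ g^{k+1} w / ∫ g^k w` tends to `max g = g(e^{-η₀}) = 2e^{-η₀}`, because the mass of
`g^k w` concentrates where `g` is near its maximum; the Gamma factors contribute
`(n + m + 1/2)/(2n + 1) → 1/2`. Hence `q_{n+1,m}/q_{n,m} → e^{-η₀}`. Each Neumann constant divided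
by `n` is, up to `O(1/n)`, an affine function of this ratio, and `cosh η₀ - e^{-η₀} = sinh η₀`
evaluates the limits. -/

open Set

theorem tendsto_affine_div_affine (α β γ δ : ℝ) (hγ : γ ≠ 0) :
    Tendsto (fun n : ℕ => (α * n + β) / (γ * n + δ)) atTop (𝓝 (α / γ)) := by
  have h := ((tendsto_const_div_atTop_nhds_zero_nat β).const_add α).div
    ((tendsto_const_div_atTop_nhds_zero_nat δ).const_add γ) (by simpa using hγ)
  rw [add_zero, add_zero] at h
  refine h.congr' ?_
  filter_upwards [eventually_ne_atTop 0] with n hn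
  have hn' : (n : ℝ) ≠ 0 := Nat.cast_ne_zero.2 hn
  simp only [Pi.div_apply]
  rw [← mul_div_mul_right _ _ hn', add_mul, add_mul, div_mul_cancel₀ _ hn',
    div_mul_cancel₀ _ hn', mul_comm α, mul_comm γ]

theorem mul_pow_sub_le_pow_succ {x d M : ℝ} (hx : 0 ≤ x) (hd : 0 ≤ d) (hdM : d ≤ M) (k : ℕ) :
    d * x ^ k - M * d ^ k ≤ x ^ (k + 1) := by
  rcases le_total d x with hdx | hxd
  · have h₁ : d * x ^ k ≤ x ^ (k + 1) := by
      rw [pow_succ']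
      exact mul_le_mul_of_nonneg_right hdx (pow_nonneg hx k)
    have h₂ : 0 ≤ M * d ^ k := mul_nonneg (hd.trans hdM) (pow_nonneg hd k)
    linarith
  · have h₁ : d * x ^ k ≤ M * d ^ k :=
      mul_le_mul hdM (pow_le_pow_left₀ hx hxd k) (pow_nonneg hx k) (hd.trans hdM)
    have h₂ : 0 ≤ x ^ (k + 1) := pow_nonneg hx (k + 1)
    linarith

section Moments

variable {g w : ℝ → ℝ} {a b : ℝ}

theorem intervalIntegrable_pow_mul (hab : a ≤ b) (hg : ContinuousOn g (Icc a b))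
    (hw : ContinuousOn w (Icc a b)) (k : ℕ) :
    IntervalIntegrable (fun s => g s ^ k * w s) volume a b :=
  ((hg.pow k).mul hw).intervalIntegrable_of_Icc hab

theorem integral_pow_succ_mul_le_s17 {M : ℝ} (hab : a ≤ b) (hg : ContinuousOn g (Icc a b))
    (hw : ContinuousOn w (Icc a b)) (hg0 : ∀ s ∈ Icc a b, 0 ≤ g s)
    (hgM : ∀ s ∈ Icc a b, g s ≤ M) (hw0 : ∀ s ∈ Icc a b, 0 ≤ w s) (k : ℕ) :
    ∫ s in a..b, g s ^ (k + 1) * w s ≤ M * ∫ s in a..b, g s ^ k * w s := by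
  rw [← intervalIntegral.integral_const_mul]
  refine integral_mono_on hab (intervalIntegrable_pow_mul hab hg hw _)
    ((intervalIntegrable_pow_mul hab hg hw k).const_mul M) fun s hs => ?_
  rw [pow_succ', mul_assoc]
  exact mul_le_mul_of_nonneg_right (hgM s hs) (mul_nonneg (pow_nonneg (hg0 s hs) k) (hw0 s hs))

theorem mul_integral_pow_mul_sub_le_s17 {d M : ℝ} (hab : a ≤ b) (hg : ContinuousOn g (Icc a b))
    (hw : ContinuousOn w (Icc a b)) (hg0 : ∀ s ∈ Icc a b, 0 ≤ g s)
    (hw0 : ∀ s ∈ Icc a b, 0 ≤ w s) (hd : 0 ≤ d) (hdM : d ≤ M) (k : ℕ) :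
    d * (∫ s in a..b, g s ^ k * w s) - M * d ^ k * ∫ s in a..b, w s ≤
      ∫ s in a..b, g s ^ (k + 1) * w s := by
  have hk := intervalIntegrable_pow_mul hab hg hw k
  have h1 : IntervalIntegrable w volume a b := hw.intervalIntegrable_of_Icc hab
  rw [← intervalIntegral.integral_const_mul, ← intervalIntegral.integral_const_mul,
    ← intervalIntegral.integral_sub (hk.const_mul d) (h1.const_mul _)]
  refine integral_mono_on hab ((hk.const_mul d).sub (h1.const_mul _))
    (intervalIntegrable_pow_mul hab hg hw _) fun s hs => ?_
  have := mul_le_mul_of_nonneg_right (mul_pow_sub_le_pow_succ (hg0 s hs) hd hdM k) (hw0 s hs)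
  linarith

theorem exists_pos_mul_pow_le_integral_pow_mul {c d : ℝ} (hg : ContinuousOn g (Icc a b))
    (hw : ContinuousOn w (Icc a b)) (hg0 : ∀ s ∈ Icc a b, 0 ≤ g s)
    (hw0 : ∀ s ∈ Icc a b, 0 ≤ w s) (hc : c ∈ Ioo a b) (hd : 0 ≤ d) (hdc : d < g c)
    (hwc : 0 < w c) :
    ∃ C > 0, ∀ k : ℕ, C * d ^ k ≤ ∫ s in a..b, g s ^ k * w s := by
  have hab : a ≤ b := (hc.1.trans hc.2).le
  have hnhds : Icc a b ∈ 𝓝 c := Icc_mem_nhds hc.1 hc.2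
  obtain ⟨δ, hδ, hball⟩ := Metric.mem_nhds_iff.1 <|
    ((hg.continuousAt hnhds).eventually (lt_mem_nhds hdc)).and <|
      ((hw.continuousAt hnhds).eventually (lt_mem_nhds (half_lt_self hwc))).and
        (Ioo_mem_nhds hc.1 hc.2)
  have hsub : Icc (c - δ / 2) (c + δ / 2) ⊆ Metric.ball c δ := by
    rw [← Real.closedBall_eq_Icc]
    exact Metric.closedBall_subset_ball (half_lt_self hδ)
  have hIcc : Icc (c - δ / 2) (c + δ / 2) ⊆ Icc a b := fun s hs =>
    Ioo_subset_Icc_self (hball (hsub hs)).2.2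
  refine ⟨δ * (w c / 2), by positivity, fun k => ?_⟩
  calc δ * (w c / 2) * d ^ k = ∫ _ in (c - δ / 2)..(c + δ / 2), d ^ k * (w c / 2) := by
        rw [intervalIntegral.integral_const, smul_eq_mul]
        ring
    _ ≤ ∫ s in (c - δ / 2)..(c + δ / 2), g s ^ k * w s := by
        refine integral_mono_on (by linarith) intervalIntegrable_const
          (intervalIntegrable_pow_mul (by linarith) (hg.mono hIcc) (hw.mono hIcc) k)
          fun s hs => ?_
        obtain ⟨hgs, hws, -⟩ := hball (hsub hs)
        exact mul_le_mul (pow_le_pow_left₀ hd hgs.le k) hws.le (by positivity)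
          (pow_nonneg (hd.trans hgs.le) k)
    _ ≤ ∫ s in a..b, g s ^ k * w s :=
        integral_mono_interval (hIcc (left_mem_Icc.2 (by linarith))).1
          (by linarith) (hIcc (right_mem_Icc.2 (by linarith))).2
          ((ae_restrict_iff' measurableSet_Ioc).2 <| Eventually.of_forall fun s hs =>
            mul_nonneg (pow_nonneg (hg0 s (Ioc_subset_Icc_self hs)) k)
              (hw0 s (Ioc_subset_Icc_self hs)))
          (intervalIntegrable_pow_mul hab hg hw k)

theorem tendsto_integral_pow_succ_mul_div {c : ℝ} (hg : ContinuousOn g (Icc a b))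
    (hw : ContinuousOn w (Icc a b)) (hg0 : ∀ s ∈ Icc a b, 0 ≤ g s)
    (hw0 : ∀ s ∈ Icc a b, 0 ≤ w s) (hc : c ∈ Ioo a b) (hmax : IsMaxOn g (Icc a b) c)
    (hgc : 0 < g c) (hwc : 0 < w c) :
    Tendsto (fun k : ℕ => (∫ s in a..b, g s ^ (k + 1) * w s) / ∫ s in a..b, g s ^ k * w s)
      atTop (𝓝 (g c)) := by
  set I : ℕ → ℝ := fun k => ∫ s in a..b, g s ^ k * w s with hI
  have hab : a ≤ b := (hc.1.trans hc.2).le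
  have hgM : ∀ s ∈ Icc a b, g s ≤ g c := isMaxOn_iff.1 hmax
  have hI0 : ∀ k, 0 ≤ I k := fun k =>
    integral_nonneg hab fun s hs => mul_nonneg (pow_nonneg (hg0 s hs) k) (hw0 s hs)
  refine tendsto_order.2 ⟨fun a' ha' => ?_, fun a' ha' => Eventually.of_forall fun k =>
    (div_le_of_le_mul₀ (hI0 k) hgc.le (integral_pow_succ_mul_le_s17 hab hg hw hg0 hgM hw0 k)).trans_lt
      ha'⟩
  obtain ⟨d, hd, hdc⟩ := exists_between (max_lt ha' hgc)
  rw [max_lt_iff] at hd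
  -- `I (k+1) ≥ d I k - g c d^k I 0` and `I k ≥ C e^k` with `e > d`, so the error term
  -- relative to `I k` is `O((d/e)^k)`.
  set e := (d + g c) / 2 with he
  have hde : d < e := by linarith
  have hde0 : 0 ≤ d / e := div_nonneg hd.2.le (by linarith)
  obtain ⟨C, hC, hCI⟩ := exists_pos_mul_pow_le_integral_pow_mul hg hw hg0 hw0 hc
    (by linarith : 0 ≤ e) (by linarith : e < g c) hwc
  have hlim : Tendsto (fun k : ℕ => d - g c * I 0 / C * (d / e) ^ k) atTop (𝓝 d) := by
    simpa using ((tendsto_pow_atTop_nhds_zero_of_lt_one hde0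
      ((div_lt_one (by linarith)).2 hde)).const_mul (g c * I 0 / C)).const_sub d
  filter_upwards [hlim.eventually (lt_mem_nhds hd.1)] with k hk
  have hIk : 0 < I k := (mul_pos hC (pow_pos (by linarith) k)).trans_le (hCI k)
  have htail : g c * d ^ k * I 0 ≤ g c * I 0 / C * (d / e) ^ k * I k := by
    calc g c * d ^ k * I 0 = g c * I 0 / C * (d / e) ^ k * (C * e ^ k) := by
          have he0 : e ≠ 0 := by linarith
          rw [div_pow]
          field_simp
      _ ≤ g c * I 0 / C * (d / e) ^ k * I k :=
          mul_le_mul_of_nonneg_left (hCI k)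
            (mul_nonneg (div_nonneg (mul_nonneg hgc.le (hI0 0)) hC.le) (pow_nonneg hde0 k))
  have hstep := mul_integral_pow_mul_sub_le_s17 hab hg hw hg0 hw0 hd.2.le hdc.le k
  rw [show (∫ s in a..b, w s) = I 0 by simp only [hI, pow_zero, one_mul]] at hstep
  refine hk.trans_le ((le_div_iff₀ hIk).2 ?_)
  nlinarith

end Moments

noncomputable def qhPrefactor (n m : ℕ) (t : ℝ) : ℝ :=
  ((-1 : ℝ) ^ m / (2 : ℝ) ^ ((n : ℝ) + 1 / 2)) *
    (Real.Gamma ((n : ℝ) + (m : ℝ) + 1 / 2) / Real.Gamma ((n : ℝ) + 1 / 2)) *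
    (t ^ 2 - 1) ^ ((m : ℝ) / 2)

noncomputable def qhIntegrand (n m : ℕ) (t s : ℝ) : ℝ :=
  (1 - s ^ 2) ^ ((n : ℝ) - 1 / 2) * (t - s) ^ (-((n : ℝ) + (m : ℝ) + 1 / 2))

theorem Qh_eq_qhPrefactor_mul (n m : ℕ) (t : ℝ) :
    Qh n m t = qhPrefactor n m t * ∫ s in (-1 : ℝ)..1, qhIntegrand n m t s :=
  rfl

theorem qhPrefactor_succ (n m : ℕ) (t : ℝ) :
    qhPrefactor (n + 1) m t = (n + m + 1 / 2) / (2 * (n + 1 / 2)) * qhPrefactor n m t := by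
  have hΓ : Real.Gamma ((n : ℝ) + 1 / 2) ≠ 0 := (Real.Gamma_pos_of_pos (by positivity)).ne'
  simp only [qhPrefactor, Nat.cast_succ]
  rw [show (n : ℝ) + 1 + m + 1 / 2 = (n + m + 1 / 2) + 1 by ring,
    show (n : ℝ) + 1 + 1 / 2 = (n + 1 / 2) + 1 by ring,
    Real.Gamma_add_one (by positivity), Real.Gamma_add_one (by positivity),
    Real.rpow_add two_pos, Real.rpow_one]
  field_simp

theorem qhPrefactor_ne_zero (n m : ℕ) {t : ℝ} (ht : 1 < t) : qhPrefactor n m t ≠ 0 := by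
  have hΓ (x : ℝ) (hx : 0 < x) : Real.Gamma x ≠ 0 := (Real.Gamma_pos_of_pos hx).ne'
  have ht2 : (t ^ 2 - 1) ^ ((m : ℝ) / 2) ≠ 0 := (Real.rpow_pos_of_pos (by nlinarith) _).ne'
  have h2 : (2 : ℝ) ^ ((n : ℝ) + 1 / 2) ≠ 0 := (Real.rpow_pos_of_pos two_pos _).ne'
  simp only [qhPrefactor]
  exact mul_ne_zero (mul_ne_zero (div_ne_zero (pow_ne_zero m (by norm_num)) h2)
    (div_ne_zero (hΓ _ (by positivity)) (hΓ _ (by positivity)))) ht2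

theorem qhIntegrand_succ (k m : ℕ) {t s : ℝ} (hs : s ^ 2 ≤ 1) (hst : s < t) :
    qhIntegrand (k + 1) m t s = ((1 - s ^ 2) / (t - s)) ^ k * qhIntegrand 1 m t s := by
  have h1 : 0 ≤ 1 - s ^ 2 := by linarith
  have h2 : 0 < t - s := by linarith
  simp only [qhIntegrand, Nat.cast_add, Nat.cast_one]
  rw [show (k : ℝ) + 1 - 1 / 2 = k + (1 - 1 / 2) by ring,
    Real.rpow_add' h1 (by positivity), Real.rpow_natCast,
    show -((k : ℝ) + 1 + m + 1 / 2) = -k + -(1 + m + 1 / 2) by ring,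
    Real.rpow_add h2, Real.rpow_neg h2.le, Real.rpow_natCast, div_pow]
  ring

theorem two_mul_exp_neg_mul_cosh (η : ℝ) : 2 * exp (-η) * cosh η = 1 + exp (-η) ^ 2 := by
  rw [cosh_eq, exp_neg]
  field_simp

theorem one_sub_sq_div_cosh_sub_le {η s : ℝ} (hs : s < cosh η) :
    (1 - s ^ 2) / (cosh η - s) ≤ 2 * exp (-η) := by
  rw [div_le_iff₀ (by linarith)]
  nlinarith [sq_nonneg (s - exp (-η)), two_mul_exp_neg_mul_cosh η]

theorem one_sub_exp_neg_sq_div_cosh_sub {η : ℝ} (hη : η ≠ 0) :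
    (1 - exp (-η) ^ 2) / (cosh η - exp (-η)) = 2 * exp (-η) := by
  have hs : cosh η - exp (-η) ≠ 0 := by
    rw [← cosh_sub_sinh, sub_sub_cancel]
    exact sinh_ne_zero.2 hη
  rw [div_eq_iff hs]
  linarith [two_mul_exp_neg_mul_cosh η]

theorem isMaxOn_one_sub_sq_div_cosh_sub {η : ℝ} (hη : η ≠ 0) :
    IsMaxOn (fun s => (1 - s ^ 2) / (cosh η - s)) (Icc (-1) 1) (exp (-η)) :=
  isMaxOn_iff.2 fun s hs => by
    rw [one_sub_exp_neg_sq_div_cosh_sub hη]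
    exact one_sub_sq_div_cosh_sub_le (hs.2.trans_lt (one_lt_cosh.2 hη))

theorem tendsto_integral_qhIntegrand_succ_div {η : ℝ} (hη : 0 < η) (m : ℕ) :
    Tendsto (fun k : ℕ => (∫ s in (-1 : ℝ)..1, qhIntegrand (k + 2) m (cosh η) s) /
      ∫ s in (-1 : ℝ)..1, qhIntegrand (k + 1) m (cosh η) s) atTop (𝓝 (2 * exp (-η))) := by
  set t := cosh η
  have ht : 1 < t := one_lt_cosh.2 hη.ne'
  set g : ℝ → ℝ := fun s => (1 - s ^ 2) / (t - s)
  have hsq {s : ℝ} (hs : s ∈ Icc (-1 : ℝ) 1) : s ^ 2 ≤ 1 := by nlinarith [hs.1, hs.2]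
  have hst {s : ℝ} (hs : s ∈ Icc (-1 : ℝ) 1) : s < t := hs.2.trans_lt ht
  have hJ (k : ℕ) : ∫ s in (-1 : ℝ)..1, qhIntegrand (k + 1) m t s =
      ∫ s in (-1 : ℝ)..1, g s ^ k * qhIntegrand 1 m t s :=
    integral_congr fun s hs => by
      rw [uIcc_of_le (by norm_num)] at hs
      exact qhIntegrand_succ k m (hsq hs) (hst hs)
  simp only [hJ]
  have hg : ContinuousOn g (Icc (-1) 1) :=
    ContinuousOn.div (by fun_prop) (by fun_prop) fun s hs => (sub_pos.2 (hst hs)).ne'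
  have hw : ContinuousOn (qhIntegrand 1 m t) (Icc (-1) 1) := by
    refine ContinuousOn.mul (Continuous.continuousOn ?_) (ContinuousOn.rpow_const (by fun_prop)
      fun s hs => Or.inl (sub_pos.2 (hst hs)).ne')
    exact (by fun_prop : Continuous fun s : ℝ => 1 - s ^ 2).rpow_const fun _ => Or.inr (by norm_num)
  have hc : exp (-η) ∈ Ioo (-1 : ℝ) 1 :=
    ⟨by linarith [exp_pos (-η)], exp_lt_one_iff.2 (by linarith)⟩
  have hmax := isMaxOn_one_sub_sq_div_cosh_sub hη.ne'
  have hgc : g (exp (-η)) = 2 * exp (-η) := one_sub_exp_neg_sq_div_cosh_sub hη.ne'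
  rw [← hgc]
  refine tendsto_integral_pow_succ_mul_div hg hw
    (fun s hs => div_nonneg (by linarith [hsq hs]) (sub_pos.2 (hst hs)).le)
    (fun s hs => mul_nonneg (Real.rpow_nonneg (by linarith [hsq hs]) _)
      (Real.rpow_nonneg (sub_pos.2 (hst hs)).le _))
    hc hmax (by rw [hgc]; positivity) ?_
  have hc2 : exp (-η) ^ 2 < 1 := by nlinarith [hc.1, hc.2]
  exact mul_pos (Real.rpow_pos_of_pos (by linarith) _)
    (Real.rpow_pos_of_pos (sub_pos.2 (hst (Ioo_subset_Icc_self hc))) _)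

theorem tendsto_qh_succ_div {η₀ : ℝ} (hη₀ : 0 < η₀) (m : ℕ) :
    Tendsto (fun n : ℕ => qh η₀ (n + 1) m / qh η₀ n m) atTop (𝓝 (exp (-η₀))) := by
  rw [← tendsto_add_atTop_iff_nat 1]
  have hP := (tendsto_affine_div_affine 1 (m + 3 / 2) 2 3 two_ne_zero).mul
    (tendsto_integral_qhIntegrand_succ_div hη₀ m)
  rw [show (1 : ℝ) / 2 * (2 * exp (-η₀)) = exp (-η₀) by ring] at hP
  refine hP.congr fun k => ?_
  rw [qh, qh, Qh_eq_qhPrefactor_mul, Qh_eq_qhPrefactor_mul, mul_div_mul_comm,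
    qhPrefactor_succ (k + 1), mul_div_cancel_right₀ _ (qhPrefactor_ne_zero _ m (one_lt_cosh.2 hη₀.ne'))]
  push_cast
  ring

theorem tendsto_rhoT_div_natCast {η₀ : ℝ} (hη₀ : 0 < η₀) (m : ℕ) :
    Tendsto (fun n : ℕ => rhoT η₀ n m / n) atTop (𝓝 (1 / 2)) := by
  have hs : sinh η₀ ≠ 0 := (sinh_pos_iff.2 hη₀).ne'
  rw [← tendsto_add_atTop_iff_nat 1]
  have h := ((tendsto_affine_div_affine (2 * cosh η₀) (cosh η₀) 1 1 one_ne_zero).add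
    ((tendsto_affine_div_affine (-2) (2 * m - 1) 1 1 one_ne_zero).mul
      (tendsto_qh_succ_div hη₀ m))).const_mul (1 / (4 * sinh η₀))
  rw [← cosh_sub_sinh, show 1 / (4 * sinh η₀) * (2 * cosh η₀ / 1 + -2 / 1 * (cosh η₀ - sinh η₀))
    = 1 / 2 by field_simp; ring] at h
  refine h.congr' ?_
  filter_upwards [eventually_ne_atTop 0] with n hn
  rw [rhoT, if_neg (by omega), Nat.add_sub_cancel]
  push_cast
  ring

theorem tendsto_sigmaT_div_natCast {η₀ : ℝ} (hη₀ : 0 < η₀) (m : ℕ) :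
    Tendsto (fun n : ℕ => sigmaT η₀ n m / n) atTop (𝓝 (-cosh η₀)) := by
  have hs : sinh η₀ ≠ 0 := (sinh_pos_iff.2 hη₀).ne'
  have h := ((tendsto_affine_div_affine (2 * cosh η₀ ^ 2) 1 1 0 one_ne_zero).add
    ((tendsto_affine_div_affine (-2 * cosh η₀) ((2 * m - 1) * cosh η₀) 1 0 one_ne_zero).mul
      (tendsto_qh_succ_div hη₀ m))).const_mul (-1 / (2 * sinh η₀))
  rw [← cosh_sub_sinh, show -1 / (2 * sinh η₀) *
    (2 * cosh η₀ ^ 2 / 1 + -2 * cosh η₀ / 1 * (cosh η₀ - sinh η₀)) = -cosh η₀ by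
      field_simp; ring] at h
  refine h.congr fun n => ?_
  rw [sigmaT]
  ring

theorem tendsto_tauT_div_natCast {η₀ : ℝ} (hη₀ : 0 < η₀) (m : ℕ) :
    Tendsto (fun n : ℕ => tauT η₀ n m / n) atTop (𝓝 (1 / 2)) := by
  have hs : sinh η₀ ≠ 0 := (sinh_pos_iff.2 hη₀).ne'
  have h := ((tendsto_affine_div_affine (2 * cosh η₀) (3 * cosh η₀) 1 0 one_ne_zero).add
    ((tendsto_affine_div_affine (-2) (2 * m - 3) 1 0 one_ne_zero).mul
      ((tendsto_add_atTop_iff_nat 1).2 (tendsto_qh_succ_div hη₀ m)))).const_mul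
    (1 / (4 * sinh η₀))
  rw [← cosh_sub_sinh, show 1 / (4 * sinh η₀) * (2 * cosh η₀ / 1 + -2 / 1 * (cosh η₀ - sinh η₀))
    = 1 / 2 by field_simp; ring] at h
  refine h.congr fun n => ?_
  rw [tauT]
  ring

/-- asymptotics of the toroidal Neumann constants. -/
theorem neumann_constants_asymptotics (η₀ : ℝ) (hη₀ : 0 < η₀) (m : ℕ) :
    Filter.Tendsto (fun n : ℕ => rhoT η₀ n m / (n : ℝ))
      Filter.atTop (nhds (1 / 2)) ∧
    Filter.Tendsto (fun n : ℕ => sigmaT η₀ n m / (n : ℝ))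
      Filter.atTop (nhds (-Real.cosh η₀)) ∧
    Filter.Tendsto (fun n : ℕ => tauT η₀ n m / (n : ℝ))
      Filter.atTop (nhds (1 / 2)) :=
  ⟨tendsto_rhoT_div_natCast hη₀ m, tendsto_sigmaT_div_natCast hη₀ m,
    tendsto_tauT_div_natCast hη₀ m⟩
end
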